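/- Every 8-dimensional 2-step nilpotent symplectic Lie algebra over K (K = ℝ or ℂ) with characteristic sequence (2,2,1,1,1,1) and with 6 generators (i.e. dim(g/[g,g]) = 6) is decomposable, i.e. is the direct sum of two nonzero ideals. -/

import Mathlib

/-- A symplectic form on a Lie algebra `g` over `K`: a `K`-bilinear form which is
alternating, nondegenerate and closed, i.e.
`θ ⁅X,Y⁆ Z + θ ⁅Y,Z⁆ X + θ ⁅Z,X⁆ Y = 0` for all `X Y Z`. -/
def IsSymplecticForm (K : Type*) [RCLike K] (g : Type*) [LieRing g] [LieAlgebra K g]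
    (θ : g → g → K) : Prop :=
  (∀ (a : K) (X Y Z : g), θ (a • X + Y) Z = a * θ X Z + θ Y Z) ∧
  (∀ (a : K) (X Y Z : g), θ X (a • Y + Z) = a * θ X Y + θ X Z) ∧
  (∀ X : g, θ X X = 0) ∧
  (∀ X : g, (∀ Y : g, θ X Y = 0) → X = 0) ∧
  (∀ X Y Z : g, θ ⁅X, Y⁆ Z + θ ⁅Y, Z⁆ X + θ ⁅Z, X⁆ Y = 0)
/-- A Lie algebra is 2-step nilpotent if `[[g,g],g] = 0` and `[g,g] ≠ 0`. -/
def IsTwoStepNilpotent (g : Type*) [LieRing g] : Prop :=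
  (∀ X Y Z : g, ⁅⁅X, Y⁆, Z⁆ = 0) ∧ ∃ X Y : g, ⁅X, Y⁆ ≠ 0
/-- A 2-step nilpotent Lie algebra has characteristic sequence `(2,…,2,1,…,1)` with exactly
`k` twos iff the maximum of `rank (ad X) = dim ⁅X, g⁆` over `X ∈ g \ [g,g]` equals `k`. -/
def HasCharSeqTwos (K : Type*) [RCLike K] (g : Type*) [LieRing g] [LieAlgebra K g]
    (k : ℕ) : Prop :=
  (∀ X : g, X ∉ LieAlgebra.derivedSeries K g 1 →
      Module.finrank K ↥(LinearMap.range (LieAlgebra.ad K g X)) ≤ k) ∧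
  ∃ X : g, X ∉ LieAlgebra.derivedSeries K g 1 ∧
      Module.finrank K ↥(LinearMap.range (LieAlgebra.ad K g X)) = k

/-!
Let `D = [g, g]`, which is `2`-dimensional. If `u` is `θ`-orthogonal to `D`, closedness of `θ` makes
`(X, Y) ↦ θ ⁅u, X⁆ Y` symmetric, and it vanishes as soon as one argument is orthogonal to `D`.
It is therefore determined by its values on a complement of `D^⊥`, of dimension at most
`dim D = 2`, i.e. by three numbers. So `2 + 3` linear conditions on `u` make this form vanish,
which by nondegeneracy means that `u` is central; in dimension `8` they leave a space of central
elements of dimension at least `3 > dim D`. A central `u ∉ D` spans an ideal complementary to any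
hyperplane containing `D`, and such a hyperplane is an ideal too.
-/

open LieAlgebra Module

lemma LieAlgebra.lie_mem_derivedSeries_one {R L : Type*} [CommRing R] [LieRing L]
    [LieAlgebra R L] (X Y : L) : ⁅X, Y⁆ ∈ derivedSeries R L 1 := by
  rw [derivedSeries_def, derivedSeriesOfIdeal_succ, derivedSeriesOfIdeal_zero]
  exact LieSubmodule.lie_mem_lie (LieSubmodule.mem_top X) (LieSubmodule.mem_top Y)

lemma LinearMap.BilinForm.finrank_le_of_isCompl_orthogonal {K V : Type*} [Field K]
    [AddCommGroup V] [Module K V] [FiniteDimensional K V] {B : LinearMap.BilinForm K V}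
    {N W : Submodule K V} (h : IsCompl (B.orthogonal N) W) : finrank K W ≤ finrank K N := by
  have h₁ := Submodule.finrank_add_eq_of_isCompl h
  have h₂ := LinearMap.BilinForm.finrank_add_finrank_orthogonal' (B := B) N
  omega

namespace LinearMap.BilinForm

variable {K L : Type*} [Field K] [LieRing L] [LieAlgebra K L] {B : LinearMap.BilinForm K L}

def IsLieCocycle (B : LinearMap.BilinForm K L) : Prop :=
  ∀ X Y Z : L, B ⁅X, Y⁆ Z + B ⁅Y, Z⁆ X + B ⁅Z, X⁆ Y = 0

lemma IsLieCocycle.apply_lie_comm (hB : B.IsLieCocycle) {u : L}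
    (hu : u ∈ B.orthogonal (derivedSeries K L 1)) (X Y : L) : B ⁅u, X⁆ Y = B ⁅u, Y⁆ X := by
  have h := hB u X Y
  rw [hu _ (lie_mem_derivedSeries_one X Y), ← lie_skew Y u, map_neg, LinearMap.neg_apply] at h
  linear_combination h

lemma IsLieCocycle.mem_center (hB : B.IsLieCocycle) (hsep : B.SeparatingLeft) {u : L}
    (hu : u ∈ B.orthogonal (derivedSeries K L 1)) {W : Submodule K L}
    (hW : B.orthogonal (derivedSeries K L 1) ⊔ W = ⊤)
    (huW : ∀ w ∈ W, ∀ w' ∈ W, B ⁅u, w⁆ w' = 0) : u ∈ center K L := by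
  have orth_right : ∀ Z, ∀ y ∈ B.orthogonal (derivedSeries K L 1), B ⁅u, Z⁆ y = 0 :=
    fun Z y hy => hy _ (lie_mem_derivedSeries_one u Z)
  have orth_left : ∀ x ∈ B.orthogonal (derivedSeries K L 1), ∀ Z, B ⁅u, x⁆ Z = 0 :=
    fun x hx Z => by rw [hB.apply_lie_comm hu]; exact orth_right Z x hx
  rw [LieModule.mem_maxTrivSubmodule]
  intro X
  rw [← lie_skew, neg_eq_zero]
  refine hsep _ fun Y => ?_
  obtain ⟨x, hx, w, hw, rfl⟩ := Submodule.mem_sup.mp (hW ▸ Submodule.mem_top : X ∈ _)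
  obtain ⟨y, hy, v, hv, rfl⟩ := Submodule.mem_sup.mp (hW ▸ Submodule.mem_top : Y ∈ _)
  simp only [lie_add, map_add, LinearMap.add_apply, huW w hw v hv, orth_right _ y hy,
    orth_left x hx, add_zero]

/-- `Quot.out` picks an ordering of each unordered pair `z`; for `u` orthogonal to `[L, L]` the
value does not depend on that choice (`IsLieCocycle.apply_lie_comm`). -/
noncomputable def lieEvalSym2 (B : LinearMap.BilinForm K L) {ι : Type*} (w : ι → L) :
    L →ₗ[K] Sym2 ι → K :=
  LinearMap.pi fun z =>
    B.flip (w (Quot.out z).2) ∘ₗ (ad K L : L →ₗ[K] Module.End K L).flip (w (Quot.out z).1)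

lemma lieEvalSym2_apply {ι : Type*} (w : ι → L) (u : L) (z : Sym2 ι) :
    lieEvalSym2 B w u z = B ⁅u, w (Quot.out z).1⁆ (w (Quot.out z).2) :=
  rfl

lemma IsLieCocycle.apply_lie_eq_zero_of_lieEvalSym2_eq_zero (hB : B.IsLieCocycle) {u : L}
    (hu : u ∈ B.orthogonal (derivedSeries K L 1)) {ι : Type*} {w : ι → L}
    (h : lieEvalSym2 B w u = 0) (i j : ι) : B ⁅u, w i⁆ (w j) = 0 := by
  have hij := congrFun h s(i, j)
  rw [lieEvalSym2_apply] at hij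
  have hout : s((Quot.out s(i, j)).1, (Quot.out s(i, j)).2) = s(i, j) := Quot.out_eq _
  rcases (Sym2.mk_eq_mk_iff (q := (i, j))).mp hout with hp | hp <;> rw [hp] at hij
  · exact hij
  · rwa [hB.apply_lie_comm hu]

theorem IsLieCocycle.exists_mem_center_notMem_derivedSeries [FiniteDimensional K L]
    (hB : B.IsLieCocycle) (hsep : B.SeparatingLeft)
    (hdim : 2 * finrank K (derivedSeries K L 1 : Submodule K L) +
      (finrank K (derivedSeries K L 1 : Submodule K L) + 1).choose 2 < finrank K L) :
    ∃ u ∈ center K L, u ∉ derivedSeries K L 1 := by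
  set D : Submodule K L := derivedSeries K L 1
  obtain ⟨W, hW⟩ := (B.orthogonal D).exists_isCompl
  let b := finBasis K W
  let Φ := (D.dualRestrict ∘ₗ B.flip).prod (lieEvalSym2 B fun i => (b i : L))
  have hker : finrank K D < finrank K (ker Φ) := by
    have h₁ := Φ.finrank_range_add_finrank_ker
    have h₂ := Submodule.finrank_le (range Φ)
    rw [finrank_prod, Subspace.dual_finrank_eq, finrank_fintype_fun_eq_card, Sym2.card,
      Fintype.card_fin] at h₂
    have hWD := finrank_le_of_isCompl_orthogonal hW
    have h₃ := Nat.choose_le_choose 2 (Nat.add_le_add_right hWD 1)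
    omega
  obtain ⟨u, huΦ, huD⟩ : ∃ u ∈ ker Φ, u ∉ D := by
    by_contra! h
    exact hker.not_ge (Submodule.finrank_mono h)
  rw [mem_ker, prod_apply, Prod.mk_eq_zero] at huΦ
  have hu : u ∈ B.orthogonal D := fun c hc => LinearMap.congr_fun huΦ.1 ⟨c, hc⟩
  refine ⟨u, hB.mem_center hsep hu hW.codisjoint.eq_top fun w hw w' hw' => ?_, huD⟩
  have hb : B.compl₁₂ (ad K L u ∘ₗ W.subtype) W.subtype = 0 :=
    ext_basis b fun i j => hB.apply_lie_eq_zero_of_lieEvalSym2_eq_zero hu huΦ.2 i j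
  exact congr($hb ⟨w, hw⟩ ⟨w', hw'⟩)

end LinearMap.BilinForm

theorem LieAlgebra.exists_isCompl_of_mem_center_of_notMem_derivedSeries {K L : Type*} [Field K]
    [LieRing L] [LieAlgebra K L] {u : L} (hu : u ∈ center K L) (huD : u ∉ derivedSeries K L 1)
    (hD : derivedSeries K L 1 ≠ ⊥) : ∃ I J : LieIdeal K L, I ≠ ⊥ ∧ J ≠ ⊥ ∧ IsCompl I J := by
  obtain ⟨f, hfu, hfD⟩ := Submodule.exists_dual_map_eq_bot_of_notMem huD inferInstance
  have hDf : (derivedSeries K L 1 : Submodule K L) ≤ LinearMap.ker f :=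
    LinearMap.le_ker_iff_map.mpr hfD
  let I : LieIdeal K L :=
    { toSubmodule := K ∙ u
      lie_mem := by
        intro x m hm
        obtain ⟨t, rfl⟩ := Submodule.mem_span_singleton.mp hm
        rw [lie_smul, (LieModule.mem_maxTrivSubmodule K L L u).mp hu x, smul_zero]
        exact Submodule.zero_mem _ }
  let J : LieIdeal K L :=
    { toSubmodule := LinearMap.ker f
      lie_mem := fun {x m} _ => hDf (lie_mem_derivedSeries_one x m) }
  refine ⟨I, J, ?_, ?_, ?_⟩
  · intro h
    have huI : u ∈ I := Submodule.mem_span_singleton_self u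
    rw [h, LieSubmodule.mem_bot] at huI
    exact huD (huI ▸ zero_mem _)
  · intro h
    refine hD (eq_bot_iff.mpr fun x hx => ?_)
    have hxJ : x ∈ J := hDf hx
    rwa [h] at hxJ
  · rw [← LieSubmodule.isCompl_toSubmodule]
    have hf : IsCoatom (LinearMap.ker f) :=
      LinearMap.isCoatom_ker_of_surjective (LinearMap.surjective fun h => hfu (by simp [h]))
    exact (Submodule.isCompl_span_singleton_of_isCoatom_of_notMem hf hfu).symm

namespace IsSymplecticForm

variable {K : Type*} [RCLike K] {g : Type*} [LieRing g] [LieAlgebra K g] {θ : g → g → K}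

lemma apply_zero_left (hθ : IsSymplecticForm K g θ) (Y : g) : θ 0 Y = 0 := by
  have h := hθ.1 1 0 0 Y
  rw [smul_zero, add_zero, one_mul] at h
  exact left_eq_add.mp h

lemma apply_zero_right (hθ : IsSymplecticForm K g θ) (X : g) : θ X 0 = 0 := by
  have h := hθ.2.1 1 X 0 0
  rw [smul_zero, add_zero, one_mul] at h
  exact left_eq_add.mp h

def toBilinForm (hθ : IsSymplecticForm K g θ) : LinearMap.BilinForm K g :=
  LinearMap.mk₂ K θ (fun X Y Z => by simpa using hθ.1 1 X Y Z)
    (fun a X Z => by simpa [hθ.apply_zero_left] using hθ.1 a X 0 Z)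
    (fun X Y Z => by simpa using hθ.2.1 1 X Y Z)
    (fun a X Z => by simpa [hθ.apply_zero_right] using hθ.2.1 a X Z 0)

lemma separatingLeft_toBilinForm (hθ : IsSymplecticForm K g θ) :
    hθ.toBilinForm.SeparatingLeft :=
  hθ.2.2.2.1

lemma isLieCocycle_toBilinForm (hθ : IsSymplecticForm K g θ) : hθ.toBilinForm.IsLieCocycle :=
  hθ.2.2.2.2

end IsSymplecticForm

theorem decomposable_of_eightDim_charSeq24_sixGen_symplectic_general
    (K : Type*) [RCLike K] (g : Type*) [LieRing g] [LieAlgebra K g] [FiniteDimensional K g]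
    (h8 : Module.finrank K g = 8)
    (hgen : Module.finrank K (g ⧸ (LieAlgebra.derivedSeries K g 1 : Submodule K g)) = 6)
    (θ : g → g → K) (hθ : IsSymplecticForm K g θ) :
    ∃ I J : LieIdeal K g, I ≠ ⊥ ∧ J ≠ ⊥ ∧ I ⊓ J = ⊥ ∧ I ⊔ J = ⊤ := by
  have hD : finrank K (derivedSeries K g 1 : Submodule K g) = 2 := by
    have := Submodule.finrank_quotient_add_finrank (derivedSeries K g 1 : Submodule K g)
    omega
  obtain ⟨u, hu, huD⟩ := hθ.isLieCocycle_toBilinForm.exists_mem_center_notMem_derivedSeries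
    hθ.separatingLeft_toBilinForm (by rw [hD, h8]; decide)
  have hD_ne_bot : derivedSeries K g 1 ≠ ⊥ := by
    intro h
    rw [← LieSubmodule.toSubmodule_eq_bot, ← Submodule.finrank_eq_zero,
      ← LieIdeal.toLieSubalgebra_toSubmodule] at h
    omega
  obtain ⟨I, J, hI, hJ, hIJ⟩ :=
    exists_isCompl_of_mem_center_of_notMem_derivedSeries hu huD hD_ne_bot
  exact ⟨I, J, hI, hJ, hIJ.inf_eq_bot, hIJ.sup_eq_top⟩

/-- Every 8-dimensional 2-step nilpotent symplectic Lie algebra over `K` with characteristic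
sequence `(2,2,1,1,1,1)` and with 6 generators (i.e. `dim (g/[g,g]) = 6`) is decomposable:
it is the direct sum of two nonzero ideals. -/
theorem decomposable_of_eightDim_charSeq24_sixGen_symplectic
    (K : Type*) [RCLike K] (g : Type*) [LieRing g] [LieAlgebra K g] [FiniteDimensional K g]
    (h2 : IsTwoStepNilpotent g) (h8 : Module.finrank K g = 8)
    (hc : HasCharSeqTwos K g 2)
    (hgen : Module.finrank K (g ⧸ (LieAlgebra.derivedSeries K g 1 : Submodule K g)) = 6)
    (θ : g → g → K) (hθ : IsSymplecticForm K g θ) :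
    ∃ I J : LieIdeal K g, I ≠ ⊥ ∧ J ≠ ⊥ ∧ I ⊓ J = ⊥ ∧ I ⊔ J = ⊤ :=
  decomposable_of_eightDim_charSeq24_sixGen_symplectic_general K g h8 hgen θ hθ
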